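/- Let D be an Enriques diagram and C a subset of its vertices such that the induced subgraph of Γ_D on C is connected, endowed with the tree structure from the order of D (root the minimal element of C, immediate predecessor of p the maximal element of {q ∈ C : q < p}). Define p →_C q iff p →_D q, for p, q ∈ C. Then →_C is a proximity relation making C into an Enriques diagram; in particular, every non-root vertex p of C is proximate (in D) to its immediate predecessor in C. -/

import Mathlib

/-- An Enriques diagram: a finite rooted tree (partial order `le`, each non-root
vertex with immediate predecessor `pred`) with a proximity relation `prox`
satisfying the standard axioms. -/
structure EnriquesDiagram (V : Type) [Fintype V] [DecidableEq V] where
  le : V → V → Prop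
  le_refl : ∀ a, le a a
  le_trans : ∀ a b c, le a b → le b c → le a c
  le_antisymm : ∀ a b, le a b → le b a → a = b
  root : V
  root_le : ∀ v, le root v
  pred : V → V
  pred_le : ∀ v, v ≠ root → le (pred v) v
  pred_ne : ∀ v, v ≠ root → pred v ≠ v
  pred_max : ∀ v q, v ≠ root → le q v → q ≠ v → le q (pred v)
  prox : V → V → Prop
  prox_pred : ∀ v, v ≠ root → prox v (pred v)
  root_not_prox : ∀ q, ¬ prox root q
  prox_gt : ∀ p q, prox p q → le q p ∧ p ≠ q
  prox_at_most_two : ∀ p a b c, prox p a → prox p b → prox p c → a = b ∨ b = c ∨ a = c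
  third_unique : ∀ p q a b, prox p q → prox a p → prox a q → prox b p → prox b q → a = b
  prox_pred_prox : ∀ p q', p ≠ root → prox p q' → q' ≠ pred p → prox (pred p) q'

namespace EnriquesDiagram

variable {V : Type} [Fintype V] [DecidableEq V] (D : EnriquesDiagram V)

/-- Number of vertices of `D` proximate to `p`. -/
noncomputable def r (p : V) : ℕ := Set.ncard {q | D.prox q p}

/-- Weight of `p` in the dual graph: `r p + 1`. -/
noncomputable def omega (p : V) : ℕ := D.r p + 1

/-- `p` is extremal: it has no successor. -/
def Extremal (p : V) : Prop := ∀ q, D.le p q → q = p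

/-- `p` is free: proximate to exactly one vertex. -/
def Free (p : V) : Prop := ∃! q, D.prox p q

/-- `p` is satellite: proximate to two distinct vertices. -/
def Satellite (p : V) : Prop := ∃ q₁ q₂, q₁ ≠ q₂ ∧ D.prox p q₁ ∧ D.prox p q₂

/-- `p` is maximal among the vertices of `D` proximate to `q`. -/
def MaxProx (p q : V) : Prop := D.prox p q ∧ ∀ u, D.prox u q → D.le p u → u = p

/-- The dual graph `Γ_D`: `p` and `q` are adjacent iff one is maximal among the
vertices proximate to the other. -/
def dualGraph : SimpleGraph V where
  Adj p q := p ≠ q ∧ (D.MaxProx p q ∨ D.MaxProx q p)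
  symm := by
    constructor
    intro p q h
    exact ⟨h.1.symm, h.2.symm⟩
  loopless := by
    constructor
    intro p h
    exact h.1 rfl

end EnriquesDiagram

/-! The root of `C` is its least element and the predecessor of `p` in `C` is the largest
element `m` of `C` below `p`. Everything restricts from `D` once we know `p → m`: if
`m ≠ D.pred p`, then `D.pred p ∉ C` and `p` is already proximate to `D.pred p` and `m`, hence
to no other vertex of `C`.

Connectivity gives `p → m`. Otherwise follow a path in `C` from `m` to `p` up to its first
edge entering the cone above `p`. That edge joins some `c ≥ p` to some `d < p` with `c`
maximal among the vertices proximate to `d`, so `d ≤ m` and `p → d`, whence `d < m`.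
A descent on `d` shows that this is impossible: no path avoiding the cone above `ν` joins
`b < a ≤ ν` when some `T ≥ ν` is maximal proximate to `b`. Indeed, such a path must enter the
cone above the successor `μ` of `b` towards `a` through an edge `(d', c')` of the same kind
with `d' ≤ b`; `d' = b` would force `c' = T`, because the satellite vertices over `b` do not
branch, and `d' < b` reproduces the configuration one level lower. -/

theorem Relation.ReflTransGen.exists_crossing {α : Type*} {r : α → α → Prop}
    {P : α → Prop} {x y : α} (h : Relation.ReflTransGen r x y) (hx : ¬ P x) (hy : P y) :
    ∃ d c, Relation.ReflTransGen (fun a b => r a b ∧ ¬ P a ∧ ¬ P b) x d ∧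
      ¬ P d ∧ r d c ∧ P c := by
  induction h using Relation.ReflTransGen.head_induction_on with
  | refl => exact absurd hy hx
  | @head a a' haa' _ ih =>
    by_cases ha' : P a'
    · exact ⟨a, a', .refl, hx, haa', ha'⟩
    · obtain ⟨d, c, had, hd, hdc, hc⟩ := ih ha'
      exact ⟨d, c, had.head ⟨haa', hx, ha'⟩, hd, hdc, hc⟩

namespace EnriquesDiagram

open Relation

variable {V : Type} [Fintype V] [DecidableEq V]

noncomputable def depth (D : EnriquesDiagram V) (x : V) : ℕ := Set.ncard {z | D.le z x}

variable {D : EnriquesDiagram V}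

theorem depth_lt_depth {x y : V} (hxy : D.le x y) (hne : x ≠ y) : D.depth x < D.depth y := by
  refine Set.ncard_lt_ncard ⟨fun z hz => D.le_trans _ _ _ hz hxy, fun hsub => hne ?_⟩
    (Set.toFinite _)
  exact D.le_antisymm _ _ hxy (hsub (D.le_refl y))

theorem depth_pred_lt {v : V} (hv : v ≠ D.root) : D.depth (D.pred v) < D.depth v :=
  depth_lt_depth (D.pred_le v hv) (D.pred_ne v hv)

theorem ne_root_of_prox {x q : V} (h : D.prox x q) : x ≠ D.root :=
  fun hx => D.root_not_prox q (hx ▸ h)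

theorem lt_of_prox {p q : V} (h : D.prox p q) : D.le q p ∧ q ≠ p :=
  ⟨(D.prox_gt p q h).1, (D.prox_gt p q h).2.symm⟩

theorem eq_root_of_le_root {x : V} (h : D.le x D.root) : x = D.root :=
  D.le_antisymm _ _ h (D.root_le x)

theorem le_total_of_le {u v y : V} (hu : D.le u y) (hv : D.le v y) :
    D.le u v ∨ D.le v u := by
  by_cases huy : u = y
  · exact .inr (huy ▸ hv)
  by_cases hvy : v = y
  · exact .inl (hvy ▸ hu)
  have hy : y ≠ D.root := fun h => huy (by subst h; exact eq_root_of_le_root hu)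
  exact le_total_of_le (D.pred_max y u hy hu huy) (D.pred_max y v hy hv hvy)
termination_by D.depth y
decreasing_by exact depth_pred_lt hy

theorem prox_of_prox_of_le {c x d : V} (hcd : D.prox c d) (hxc : D.le x c) (hdx : D.le d x)
    (hxd : x ≠ d) : D.prox x d := by
  by_cases hxc' : x = c
  · exact hxc' ▸ hcd
  have hc : c ≠ D.root := ne_root_of_prox hcd
  have hx : D.le x (D.pred c) := D.pred_max c x hc hxc hxc'
  have hdc : d ≠ D.pred c := fun h => hxd (D.le_antisymm _ _ (h ▸ hx) hdx)
  exact prox_of_prox_of_le (D.prox_pred_prox c d hc hcd hdc) hx hdx hxd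
termination_by D.depth c
decreasing_by exact depth_pred_lt hc

theorem exists_pred_eq_of_lt {a b : V} (hba : D.le b a) (hne : b ≠ a) :
    ∃ μ, μ ≠ D.root ∧ D.pred μ = b ∧ D.le μ a := by
  have ha : a ≠ D.root := fun h => hne (by subst h; exact eq_root_of_le_root hba)
  by_cases hpred : D.pred a = b
  · exact ⟨a, ha, hpred, D.le_refl a⟩
  obtain ⟨μ, hμ, hμb, hμa⟩ :=
    exists_pred_eq_of_lt (D.pred_max a b ha hba hne) (Ne.symm hpred)
  exact ⟨μ, hμ, hμb, D.le_trans _ _ _ hμa (D.pred_le a ha)⟩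
termination_by D.depth a
decreasing_by exact depth_pred_lt ha

theorem eq_of_pred_eq_of_prox {w q w₁ w₂ : V} (hw : D.prox w q) (h₁ : D.pred w₁ = w)
    (h₂ : D.pred w₂ = w) (hw₁ : D.prox w₁ q) (hw₂ : D.prox w₂ q) : w₁ = w₂ :=
  D.third_unique w q w₁ w₂ hw (h₁ ▸ D.prox_pred w₁ (ne_root_of_prox hw₁)) hw₁
    (h₂ ▸ D.prox_pred w₂ (ne_root_of_prox hw₂)) hw₂

theorem le_total_of_prox {x y z q : V} (hx : D.prox x q) (hy : D.prox y q) (hzx : D.le z x)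
    (hzy : D.le z y) (hzq : ¬ D.le z q) : D.le x y ∨ D.le y x := by
  by_cases hxz : D.le x z
  · exact .inl (D.le_trans _ _ _ hxz hzy)
  by_cases hyz : D.le y z
  · exact .inr (D.le_trans _ _ _ hyz hzx)
  have hxr : x ≠ D.root := ne_root_of_prox hx
  have hyr : y ≠ D.root := ne_root_of_prox hy
  have hzpx : D.le z (D.pred x) := D.pred_max x z hxr hzx fun h => hxz (h ▸ D.le_refl z)
  have hzpy : D.le z (D.pred y) := D.pred_max y z hyr hzy fun h => hyz (h ▸ D.le_refl z)
  have hpx : D.prox (D.pred x) q :=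
    D.prox_pred_prox x q hxr hx fun h => hzq (h ▸ hzpx)
  have hpy : D.prox (D.pred y) q :=
    D.prox_pred_prox y q hyr hy fun h => hzq (h ▸ hzpy)
  by_cases hpp : D.pred x = D.pred y
  · exact .inl (eq_of_pred_eq_of_prox hpx rfl hpp.symm hx hy ▸ D.le_refl x)
  rcases le_total_of_prox hpx hy hzpx hzy hzq with hpxy | hypx
  · rcases le_total_of_prox hx hpy hzx hzpy hzq with hxpy | hpyx
    · exact .inl (D.le_trans _ _ _ hxpy (D.pred_le y hyr))
    by_cases hxy : D.pred x = y
    · exact .inr (hxy ▸ D.pred_le x hxr)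
    by_cases hyx : D.pred y = x
    · exact .inl (hyx ▸ D.pred_le y hyr)
    exact absurd (D.le_antisymm _ _ (D.pred_max y _ hyr hpxy hxy)
      (D.pred_max x _ hxr hpyx hyx)) hpp
  · exact .inr (D.le_trans _ _ _ hypx (D.pred_le x hxr))
termination_by D.depth x + D.depth y
decreasing_by
  · have := depth_pred_lt hxr; omega
  · have := depth_pred_lt hyr; omega

theorem eq_of_maxProx {c T b z : V} (hc : D.MaxProx c b) (hT : D.MaxProx T b)
    (hzc : D.le z c) (hzT : D.le z T) (hzb : ¬ D.le z b) : c = T := by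
  rcases le_total_of_prox hc.1 hT.1 hzc hzT hzb with h | h
  · exact (hc.2 T hT.1 h).symm
  · exact hT.2 c hc.1 h

def AdjWithin (D : EnriquesDiagram V) (S : Set V) (p q : V) : Prop :=
  D.dualGraph.Adj p q ∧ p ∈ S ∧ q ∈ S

instance (S : Set V) : Std.Symm (D.AdjWithin S) where
  symm _ _ h := ⟨h.1.symm, h.2.2, h.2.1⟩

theorem AdjWithin.mono {S T : Set V} (hST : S ⊆ T) {p q : V} (h : D.AdjWithin S p q) :
    D.AdjWithin T p q :=
  ⟨h.1, hST h.2.1, hST h.2.2⟩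

theorem reflTransGen_adjWithin_of_connected {S : Set V}
    (hS : (D.dualGraph.induce S).Connected) {x y : V} (hx : x ∈ S) (hy : y ∈ S) :
    ReflTransGen (D.AdjWithin S) x y :=
  ((SimpleGraph.reachable_iff_reflTransGen _ _).1 (hS.preconnected ⟨x, hx⟩ ⟨y, hy⟩)).lift
    Subtype.val fun a b hab => ⟨hab, a.2, b.2⟩

theorem exists_adjWithin_crossing {S T : Set V} {x y : V}
    (h : ReflTransGen (D.AdjWithin S) x y) (hx : x ∉ T) (hy : y ∈ T) :
    ∃ d c, ReflTransGen (D.AdjWithin (S \ T)) x d ∧ d ∉ T ∧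
      D.AdjWithin S d c ∧ c ∈ T := by
  obtain ⟨d, c, hxd, hd, hdc, hc⟩ := h.exists_crossing hx hy
  refine ⟨d, c, ReflTransGen.mono (fun a b hab => ?_) _ _ hxd, hd, hdc, hc⟩
  exact ⟨hab.1.1, ⟨hab.1.2.1, hab.2.1⟩, ⟨hab.1.2.2, hab.2.2⟩⟩

theorem le_or_le_of_adj {p q : V} (h : D.dualGraph.Adj p q) : D.le p q ∨ D.le q p :=
  h.2.symm.imp (fun h => (lt_of_prox h.1).1) fun h => (lt_of_prox h.1).1

theorem maxProx_of_adj_of_le {μ c d : V} (hdc : D.dualGraph.Adj d c) (hμc : D.le μ c)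
    (hμd : ¬ D.le μ d) : D.MaxProx c d ∧ D.le d μ ∧ d ≠ μ := by
  rcases hdc.2 with hdc | hcd
  · exact absurd (D.le_trans _ _ _ hμc (lt_of_prox hdc.1).1) hμd
  refine ⟨hcd, ?_, fun h => hμd (h ▸ D.le_refl d)⟩
  exact (le_total_of_le hμc (lt_of_prox hcd.1).1).resolve_left hμd

theorem not_reflTransGen_adjWithin_compl {T b a ν : V} (hT : D.MaxProx T b) (hba : D.le b a)
    (hne : b ≠ a) (haν : D.le a ν) (hνT : D.le ν T) :
    ¬ ReflTransGen (D.AdjWithin {v | D.le ν v}ᶜ) a b := by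
  intro hab
  obtain ⟨μ, hμ, hμb, hμa⟩ := exists_pred_eq_of_lt hba hne
  have hbμ : D.le b μ ∧ b ≠ μ := hμb ▸ ⟨D.pred_le μ hμ, D.pred_ne μ hμ⟩
  have hμb' : ¬ D.le μ b := fun h => hbμ.2 (D.le_antisymm _ _ hbμ.1 h)
  obtain ⟨d, c, hbd, hμd, ⟨hdc, -, hνc⟩, hμc⟩ := exists_adjWithin_crossing
    (T := {v | D.le μ v}) (symm hab) hμb' hμa
  obtain ⟨hcd, hdμ, hdμ'⟩ := maxProx_of_adj_of_le hdc hμc hμd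
  have hdb : D.le d b := hμb ▸ D.pred_max μ d hμ hdμ hdμ'
  by_cases hdb' : d = b
  · subst hdb'
    have hμT : D.le μ T := D.le_trans _ _ _ hμa (D.le_trans _ _ _ haν hνT)
    exact hνc (eq_of_maxProx hcd hT hμc hμT hμd ▸ hνT)
  exact not_reflTransGen_adjWithin_compl hcd hdb hdb' hbμ.1 hμc
    (ReflTransGen.mono (fun _ _ h => h.mono (Set.sdiff_subset_compl _ _)) _ _ hbd)
termination_by D.depth b
decreasing_by exact depth_lt_depth hdb hdb'

def IsGreatestBelow (D : EnriquesDiagram V) (S : Set V) (v m : V) : Prop :=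
  m ∈ S ∧ D.le m v ∧ m ≠ v ∧ ∀ q ∈ S, D.le q v → q ≠ v → D.le q m

theorem prox_of_isGreatestBelow {S : Set V} (hS : (D.dualGraph.induce S).Connected) {p m : V}
    (hp : p ∈ S) (hm : D.IsGreatestBelow S p m) : D.prox p m := by
  obtain ⟨hmS, hmp, hmp', hmax⟩ := hm
  by_contra hpm
  have hpm' : ¬ D.le p m := fun h => hmp' (D.le_antisymm _ _ hmp h)
  obtain ⟨d, c, hmd, hpd, ⟨hdc, hdS, -⟩, hpc⟩ := exists_adjWithin_crossing
    (T := {v | D.le p v}) (reflTransGen_adjWithin_of_connected hS hmS hp) hpm' (D.le_refl p)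
  obtain ⟨hcd, hdp, hdp'⟩ := maxProx_of_adj_of_le hdc hpc hpd
  by_cases hdm : d = m
  · exact hpm (hdm ▸ prox_of_prox_of_le hcd.1 hpc hdp (Ne.symm hdp'))
  exact not_reflTransGen_adjWithin_compl hcd (hmax d hdS hdp hdp') hdm hmp hpc
    (ReflTransGen.mono (fun _ _ h => h.mono (Set.sdiff_subset_compl _ _)) _ _ hmd)

theorem exists_isGreatestBelow {S : Set V} {r v : V} (hr : r ∈ S) (hrv : D.le r v)
    (hne : r ≠ v) : ∃ m, D.IsGreatestBelow S v m := by
  obtain ⟨m, ⟨hmS, hmv, hmv'⟩, hmax⟩ := Set.exists_max_image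
    {q | q ∈ S ∧ D.le q v ∧ q ≠ v} D.depth (Set.toFinite _) ⟨r, hr, hrv, hne⟩
  refine ⟨m, hmS, hmv, hmv', fun q hqS hqv hqv' => ?_⟩
  by_cases hqm : m = q
  · exact hqm ▸ D.le_refl m
  refine (le_total_of_le hqv hmv).resolve_right fun hmq => ?_
  exact absurd (hmax q ⟨hqS, hqv, hqv'⟩) (not_le.2 (depth_lt_depth hmq hqm))

theorem exists_forall_le_of_connected {S : Set V} (hS : (D.dualGraph.induce S).Connected) :
    ∃ r ∈ S, ∀ x ∈ S, D.le r x := by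
  obtain ⟨r, hrS, hmin⟩ := Set.exists_min_image S D.depth (Set.toFinite _)
    (hS.nonempty.elim fun x => ⟨x, x.2⟩)
  refine ⟨r, hrS, fun x hx => ?_⟩
  have hrx := reflTransGen_adjWithin_of_connected hS hrS hx
  clear hx
  induction hrx with
  | refl => exact D.le_refl r
  | @tail y z _ hyz hry =>
    rcases le_or_le_of_adj hyz.1 with hyz' | hzy
    · exact D.le_trans _ _ _ hry hyz'
    by_cases hzr' : z = r
    · exact hzr' ▸ D.le_refl r
    refine (le_total_of_le hry hzy).resolve_right fun hzr => ?_
    exact absurd (hmin z hyz.2.2) (not_le.2 (depth_lt_depth hzr hzr'))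

theorem prox_of_isGreatestBelow_of_prox {S : Set V} {p m q : V} (hm : D.IsGreatestBelow S p m)
    (hpm : D.prox p m) (hpq : D.prox p q) (hqS : q ∈ S) (hqm : q ≠ m) : D.prox m q := by
  have hp : p ≠ D.root := ne_root_of_prox hpm
  by_cases hmp : m = D.pred p
  · exact hmp ▸ D.prox_pred_prox p q hp hpq (hmp ▸ hqm)
  have hpS : D.pred p ∉ S := fun h => hmp <| D.le_antisymm _ _
    (D.pred_max p m hp hm.2.1 hm.2.2.1) (hm.2.2.2 _ h (D.pred_le p hp) (D.pred_ne p hp))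
  rcases D.prox_at_most_two p (D.pred p) m q (D.prox_pred p hp) hpm hpq with h | h | h
  · exact absurd h.symm hmp
  · exact absurd h.symm hqm
  · exact absurd (h ▸ hqS) hpS

def restrict (D : EnriquesDiagram V) (C : Finset V) (r : {x : V // x ∈ C})
    (pred : {x : V // x ∈ C} → {x : V // x ∈ C}) (hr : ∀ x : {x : V // x ∈ C}, D.le r x)
    (hpred : ∀ v, v ≠ r → D.IsGreatestBelow C v (pred v))
    (hprox : ∀ v, v ≠ r → D.prox v (pred v)) : EnriquesDiagram {x : V // x ∈ C} where
  le a b := D.le a b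
  le_refl a := D.le_refl a
  le_trans a b c := D.le_trans a b c
  le_antisymm a b hab hba := Subtype.ext (D.le_antisymm a b hab hba)
  root := r
  root_le := hr
  pred := pred
  pred_le v hv := (hpred v hv).2.1
  pred_ne v hv h := (hpred v hv).2.2.1 (congrArg Subtype.val h)
  pred_max v q hv hqv hq := (hpred v hv).2.2.2 q q.2 hqv fun h => hq (Subtype.ext h)
  prox a b := D.prox a b
  prox_pred := hprox
  root_not_prox q h := (lt_of_prox h).2 (D.le_antisymm _ _ (lt_of_prox h).1 (hr q))
  prox_gt p q h :=
    ⟨(lt_of_prox h).1, fun hpq => (lt_of_prox h).2 (congrArg Subtype.val hpq.symm)⟩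
  prox_at_most_two p a b c ha hb hc := by
    simpa only [Subtype.ext_iff] using D.prox_at_most_two p a b c ha hb hc
  third_unique p q a b hpq hap haq hbp hbq :=
    Subtype.ext (D.third_unique p q a b hpq hap haq hbp hbq)
  prox_pred_prox p q hp hpq hqp :=
    prox_of_isGreatestBelow_of_prox (hpred p hp) (hprox p hp) hpq q.2 fun h => hqp (Subtype.ext h)

end EnriquesDiagram

open EnriquesDiagram in
/-- If `C` induces a connected subgraph of the dual graph of `D`, then `C`, with
the order and the proximity restricted from `D`, is an Enriques diagram; in
particular every non-root vertex of `C` is proximate (in `D`) to its immediate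
predecessor in `C`. -/
theorem stmt7 {V : Type} [Fintype V] [DecidableEq V] (D : EnriquesDiagram V)
    (C : Finset V) (hconn : (D.dualGraph.induce (↑C : Set V)).Connected) :
    ∃ E : EnriquesDiagram {x : V // x ∈ C},
      (∀ a b, E.le a b ↔ D.le a.1 b.1) ∧
      (∀ a b, E.prox a b ↔ D.prox a.1 b.1) ∧
      (∀ p, p ≠ E.root → D.prox p.1 (E.pred p).1) := by
  obtain ⟨r, hrC, hr⟩ := exists_forall_le_of_connected hconn
  have hpred (v : {x : V // x ∈ C}) :
      ∃ m : {x : V // x ∈ C}, v ≠ ⟨r, hrC⟩ → D.IsGreatestBelow C v m := by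
    by_cases hv : v = ⟨r, hrC⟩
    · exact ⟨v, fun h => absurd hv h⟩
    obtain ⟨m, hm⟩ := exists_isGreatestBelow hrC (hr v v.2) fun h => hv (Subtype.ext h.symm)
    exact ⟨⟨m, hm.1⟩, fun _ => hm⟩
  choose pred hpred using hpred
  let E := D.restrict C ⟨r, hrC⟩ pred (fun x => hr x x.2) hpred
    fun v hv => prox_of_isGreatestBelow hconn v.2 (hpred v hv)
  exact ⟨E, fun _ _ => Iff.rfl, fun _ _ => Iff.rfl, E.prox_pred⟩
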